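/- arXiv:1704.03429 — 5 statements merged into one kernel-verified Lean document; each statement's English description precedes it below -/
import Mathlib

section
/- For every positive integer n, the sum over k from 0 to n-1 of 1/(1 + 2·sin²(kπ/n)) equals (n/√3)·(2/(1 - (2-√3)^n) - 1). -/
/-!
Put `r = 2 - √3`, so that `r + r⁻¹ = 4`, and `ζ = exp (2πi / n)`. The Poisson kernel
`Re ((ζ^k + r) / (ζ^k - r)) = (1 - r²) / |ζ^k - r|²` then equals `√3 / (1 + 2 sin² (kπ / n))`.
Summed over the `n`-th roots of unity, `(z + r) / (z - r)` is expressed through the logarithmic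
derivative of `X^n - 1` at `r`, giving `n (1 + rⁿ) / (1 - rⁿ)`.
-/

open Finset Polynomial

theorem IsPrimitiveRoot.sum_one_div_sub_pow {K : Type*} [Field K] {ζ : K} {n : ℕ}
    (hζ : IsPrimitiveRoot ζ n) {x : K} (hx : x ^ n ≠ 1) :
    ∑ k ∈ range n, 1 / (x - ζ ^ k) = n * x ^ (n - 1) / (x ^ n - 1) := by
  have h := (X_pow_sub_one_splits hζ).eval_derivative_div_eval_of_ne_zero (x := x)
    (by simpa [sub_eq_zero] using hx)
  rw [← nthRoots, hζ.nthRoots_eq (one_pow n)] at h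
  simpa [Finset.sum, derivative_X_pow] using h.symm

theorem IsPrimitiveRoot.sum_add_div_sub_pow {K : Type*} [Field K] {ζ : K} {n : ℕ}
    (hζ : IsPrimitiveRoot ζ n) {x : K} (hx : x ^ n ≠ 1) :
    ∑ k ∈ range n, (ζ ^ k + x) / (ζ ^ k - x) = n * (2 / (1 - x ^ n) - 1) := by
  have hn : n ≠ 0 := by rintro rfl; exact hx (pow_zero x)
  have hroot : ∀ k, x - ζ ^ k ≠ 0 := fun k h => hx <| by
    rw [sub_eq_zero.1 h, ← pow_mul, mul_comm, pow_mul, hζ.pow_eq_one, one_pow]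
  have hterm : ∀ k, (ζ ^ k + x) / (ζ ^ k - x) = 1 - 2 * x * (1 / (x - ζ ^ k)) := fun k => by
    have hxk := hroot k
    have hkx : ζ ^ k - x ≠ 0 := sub_ne_zero.2 (sub_ne_zero.1 hxk).symm
    field_simp
    ring
  have hpow : x * x ^ (n - 1) = x ^ n := by
    rw [← pow_succ', Nat.sub_add_cancel (Nat.pos_of_ne_zero hn)]
  have hx' : 1 - x ^ n ≠ 0 := sub_ne_zero.2 (Ne.symm hx)
  simp only [hterm, sum_sub_distrib, ← mul_sum, hζ.sum_one_div_sub_pow hx, sum_const, card_range,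
    nsmul_eq_mul, mul_one]
  rw [← neg_sub 1 (x ^ n), div_neg]
  field_simp
  linear_combination (2 * n) * hpow

theorem Complex.re_exp_add_div_exp_sub (r θ : ℝ) :
    ((exp (θ * I) + r) / (exp (θ * I) - r)).re
      = (1 - r ^ 2) / (1 - 2 * r * Real.cos θ + r ^ 2) := by
  rw [div_re, normSq_apply]
  simp only [add_re, sub_re, add_im, sub_im, exp_ofReal_mul_I_re, exp_ofReal_mul_I_im, ofReal_re,
    ofReal_im, add_zero, sub_zero]
  have := Real.sin_sq_add_cos_sq θ
  rw [← add_div]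
  congr 1
  · linear_combination this
  · linear_combination this

theorem Complex.re_exp_add_div_exp_sub_two_sub_sqrt_three (θ : ℝ) :
    ((exp (θ * I) + (2 - √3 : ℝ)) / (exp (θ * I) - (2 - √3 : ℝ))).re = √3 / (2 - Real.cos θ) := by
  rw [re_exp_add_div_exp_sub]
  set r := 2 - √3
  have h3 : √3 ^ 2 = 3 := Real.sq_sqrt (by norm_num)
  have h1 : 1 - r ^ 2 = 2 * √3 * r := by linear_combination h3
  have h2 : 1 + r ^ 2 = 4 * r := by linear_combination h3
  have hr : 0 < r := by nlinarith [Real.sqrt_nonneg 3]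
  have hc : 0 < 2 - Real.cos θ := by linarith [Real.cos_le_one θ]
  rw [div_eq_div_iff (by nlinarith) hc.ne']
  linear_combination (2 - Real.cos θ) * h1 - √3 * h2

theorem stmt_0 (n : ℕ) (hn : 0 < n) :
    ∑ k ∈ Finset.range n, (1 : ℝ) / (1 + 2 * Real.sin (k * Real.pi / n) ^ 2) =
      (n / Real.sqrt 3) * (2 / (1 - (2 - Real.sqrt 3) ^ n) - 1) := by
  set r : ℝ := 2 - √3
  set ζ : ℂ := Complex.exp (2 * Real.pi * Complex.I / n)
  have hζ : IsPrimitiveRoot ζ n := Complex.isPrimitiveRoot_exp n hn.ne'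
  have hrn : (r : ℂ) ^ n ≠ 1 := by
    have h3 : √3 ^ 2 = 3 := Real.sq_sqrt (by norm_num)
    have hr1 : r ^ n < 1 :=
      pow_lt_one₀ (by nlinarith [Real.sqrt_nonneg 3]) (by nlinarith [Real.sqrt_nonneg 3]) hn.ne'
    exact_mod_cast hr1.ne
  have hterm (k : ℕ) : (1 : ℝ) / (1 + 2 * Real.sin (k * Real.pi / n) ^ 2)
      = ((ζ ^ k + r) / (ζ ^ k - r)).re / √3 := by
    have hζk : ζ ^ k = Complex.exp (↑(2 * (k * Real.pi / n)) * Complex.I) := by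
      rw [← Complex.exp_nat_mul]; push_cast; ring_nf
    rw [hζk, Complex.re_exp_add_div_exp_sub_two_sub_sqrt_three, Real.cos_two_mul, Real.cos_sq',
      div_div_cancel_left' (Real.sqrt_pos.2 (by norm_num)).ne']
    ring_nf
  calc ∑ k ∈ range n, (1 : ℝ) / (1 + 2 * Real.sin (k * Real.pi / n) ^ 2)
      = (∑ k ∈ range n, (ζ ^ k + r) / (ζ ^ k - r)).re / √3 := by
        rw [Complex.re_sum, sum_div]; exact sum_congr rfl fun k _ => hterm k
    _ = (n / √3) * (2 / (1 - r ^ n) - 1) := by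
        rw [hζ.sum_add_div_sub_pow hrn]
        norm_cast
        ring
end

section
/- For every positive integer n, ∑_{k=1}^{n-1} 1/sin²(kπ/n) = (n²-1)/3. -/
/-!
With `ζ = exp (2πi/n)` one has `1 / sin² (kπ/n) = -4 ζᵏ / (ζᵏ - 1)²`. For an `n`-th root of
unity `z ≠ 1`, summing by parts twice gives `∑_{j<n} j (n - j) zʲ = 2n z / (z - 1)²`. Summing this
over `z = ζᵏ`, `1 ≤ k ≤ n - 1`, and using `∑_{k=1}^{n-1} ζ^{jk} = -1` for `0 < j < n`, the sum of
the `ζᵏ / (ζᵏ - 1)²` becomes `-(2n)⁻¹ ∑_{j<n} j (n - j) = -(n² - 1) / 12`.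
-/

open Finset Complex

theorem Finset.sum_range_eq_add_sum_Icc_one {M : Type*} [AddCommMonoid M] (f : ℕ → M) {n : ℕ}
    (hn : 0 < n) : ∑ k ∈ range n, f k = f 0 + ∑ k ∈ Icc 1 (n - 1), f k := by
  rw [range_eq_Ico, sum_eq_sum_Ico_succ_bot hn]
  rfl

theorem six_mul_sum_range_mul_sub {R : Type*} [CommRing R] (c : R) (m : ℕ) :
    6 * ∑ j ∈ range m, (j * (c - j) : R) = m * (m - 1) * (3 * c - 2 * m + 1) := by
  induction m with
  | zero => simp
  | succ m ih => rw [sum_range_succ, mul_add, ih]; push_cast; ring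

theorem sub_one_mul_sum_range_mul_pow {R : Type*} [CommRing R] (f : ℕ → R) (z : R) (n : ℕ) :
    (z - 1) * ∑ j ∈ range n, f j * z ^ j =
      f n * z ^ n - f 0 - z * ∑ j ∈ range n, (f (j + 1) - f j) * z ^ j := by
  have htelescope := sum_range_sub (fun j ↦ f j * z ^ j) n
  rw [pow_zero, mul_one] at htelescope
  rw [← htelescope, mul_sum, mul_sum, ← sum_sub_distrib]
  exact sum_congr rfl fun j _ ↦ by ring

theorem geom_sum_eq_zero_of_pow_eq_one {K : Type*} [Field K] {z : K} {n : ℕ} (hzn : z ^ n = 1)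
    (hz : z ≠ 1) : ∑ j ∈ range n, z ^ j = 0 := by
  rw [geom_sum_eq hz, hzn, sub_self, zero_div]

theorem sum_range_mul_sub_mul_pow_of_pow_eq_one {K : Type*} [Field K] {z : K} {n : ℕ}
    (hzn : z ^ n = 1) (hz : z ≠ 1) :
    ∑ j ∈ range n, (j * (n - j) : K) * z ^ j = 2 * n * z / (z - 1) ^ 2 := by
  have hfirst : (z - 1) * ∑ j ∈ range n, (j * (n - j) : K) * z ^ j =
      -z * ∑ j ∈ range n, ((n : K) - 1 - 2 * j) * z ^ j := by
    rw [sub_one_mul_sum_range_mul_pow]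
    push_cast
    simp only [sub_self, mul_zero, zero_mul, sub_zero, zero_sub, neg_mul]
    congr 2
    exact sum_congr rfl fun j _ ↦ by ring
  have hsecond : (z - 1) * ∑ j ∈ range n, ((n : K) - 1 - 2 * j) * z ^ j = -2 * n := by
    rw [sub_one_mul_sum_range_mul_pow, sum_congr rfl fun j _ ↦ show
      ((n : K) - 1 - 2 * (j + 1 : ℕ) - (n - 1 - 2 * j)) * z ^ j = -2 * z ^ j by push_cast; ring,
      ← mul_sum, geom_sum_eq_zero_of_pow_eq_one hzn hz, hzn]
    push_cast
    ring
  rw [eq_div_iff (pow_ne_zero 2 (sub_ne_zero.2 hz))]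
  linear_combination (z - 1) * hfirst - z * hsecond

theorem IsPrimitiveRoot.sum_pow_div_pow_sub_one_sq {K : Type*} [Field K] [CharZero K] {ζ : K}
    {n : ℕ} (hζ : IsPrimitiveRoot ζ n) (hn : 0 < n) :
    ∑ k ∈ Icc 1 (n - 1), ζ ^ k / (ζ ^ k - 1) ^ 2 = -((n : K) ^ 2 - 1) / 12 := by
  have hn' : (n : K) ≠ 0 := by exact_mod_cast hn.ne'
  have hterm : ∀ k ∈ Icc 1 (n - 1), ζ ^ k / (ζ ^ k - 1) ^ 2 =
      (2 * n : K)⁻¹ * ∑ j ∈ range n, (j * (n - j) : K) * (ζ ^ j) ^ k := by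
    intro k hk
    have hk := mem_Icc.1 hk
    simp_rw [pow_right_comm ζ _ k]
    rw [sum_range_mul_sub_mul_pow_of_pow_eq_one (by rw [pow_right_comm, hζ.pow_eq_one, one_pow])
      (hζ.pow_ne_one_of_pos_of_lt (by omega) (by omega))]
    field_simp
  have hinner : ∀ j ∈ range n, (j * (n - j) : K) * ∑ k ∈ Icc 1 (n - 1), (ζ ^ j) ^ k =
      -(j * (n - j)) := by
    intro j hj
    rcases Nat.eq_zero_or_pos j with rfl | hj0
    · simp
    have hgeom := sum_range_eq_add_sum_Icc_one (fun k ↦ (ζ ^ j) ^ k) hn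
    rw [geom_sum_eq_zero_of_pow_eq_one (by rw [pow_right_comm, hζ.pow_eq_one, one_pow])
      (hζ.pow_ne_one_of_pos_of_lt hj0.ne' (mem_range.1 hj)), pow_zero] at hgeom
    rw [eq_neg_add_of_add_eq hgeom.symm]
    ring
  have hsum : ∑ j ∈ range n, (j * (n - j) : K) = n * (n ^ 2 - 1) / 6 := by
    linear_combination six_mul_sum_range_mul_sub (n : K) n / 6
  rw [sum_congr rfl hterm, ← mul_sum, sum_comm, sum_congr rfl fun j _ ↦ by rw [← mul_sum],
    sum_congr rfl hinner, sum_neg_distrib, hsum]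
  field_simp
  ring

-- Both sides are `0` where `sin x = 0`, since then `exp (2 * x * I) = 1`.
theorem Complex.inv_sin_sq (x : ℂ) :
    (sin x ^ 2)⁻¹ = -4 * exp (2 * x * I) / (exp (2 * x * I) - 1) ^ 2 := by
  have hsq : exp (2 * x * I) = exp (x * I) ^ 2 := by rw [sq, ← exp_add]; ring_nf
  have hneg : exp (-x * I) = (exp (x * I))⁻¹ := by rw [← exp_neg, neg_mul]
  have hsin : sin x ^ 2 = -(exp (2 * x * I) - 1) ^ 2 / (4 * exp (2 * x * I)) := by
    have := exp_ne_zero (x * I)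
    rw [sin, hneg, hsq]
    field_simp
    rw [I_sq]
    ring
  rw [hsin, inv_div, div_neg]
  ring

theorem stmt_1 (n : ℕ) (hn : 0 < n) :
    ∑ k ∈ Finset.Icc 1 (n - 1), (1 : ℝ) / Real.sin (k * Real.pi / n) ^ 2 =
      ((n : ℝ) ^ 2 - 1) / 3 := by
  set ζ := exp (2 * Real.pi * I / n)
  have hterm (k : ℕ) :
      ((1 / Real.sin (k * Real.pi / n) ^ 2 : ℝ) : ℂ) = -4 * (ζ ^ k / (ζ ^ k - 1) ^ 2) := by
    have harg : 2 * ((k * Real.pi / n : ℝ) : ℂ) * I = k * (2 * Real.pi * I / n) := by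
      push_cast
      ring
    rw [one_div, ofReal_inv, ofReal_pow, ofReal_sin, inv_sin_sq, harg, exp_nat_mul, mul_div_assoc]
  apply ofReal_injective
  rw [ofReal_sum, sum_congr rfl fun k _ ↦ hterm k, ← mul_sum,
    (isPrimitiveRoot_exp n hn.ne').sum_pow_div_pow_sub_one_sq hn]
  push_cast
  ring
end

section
/- Define G : ℕ → ℤ by G₀ = 0, G₁ = 1, G_{n+2} = 4·G_{n+1} − G_n. Then for every positive integer n, (n/√3)·(2/(1 − (2-√3)^n) − 1) = 2n·G_n²/(G_{2n} − 2·G_n) as real numbers. -/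
/-!
Write `α = 2 + √3` and `β = 2 - √3`, so `αβ = 1`. Binet's formula gives
`G n = (αⁿ - βⁿ) / (2√3)` and `G (2n) - 2 G n = (αⁿ - βⁿ)(αⁿ + βⁿ - 2) / (2√3)`, so the right-hand
side is `(n/√3) (αⁿ - βⁿ) / (αⁿ + βⁿ - 2)`. Multiplying numerator and denominator by `βⁿ` turns
this into `(n/√3) (1 + βⁿ) / (1 - βⁿ) = (n/√3) (2 / (1 - βⁿ) - 1)`.
-/

def G : ℕ → ℤ
  | 0 => 0
  | 1 => 1
  | n + 2 => 4 * G (n + 1) - G n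

open Real

theorem G_eq_binet : ∀ n : ℕ, (G n : ℝ) = ((2 + √3) ^ n - (2 - √3) ^ n) / (2 * √3)
  | 0 => by simp [G]
  | 1 => by simp [G]; field_simp; ring
  | n + 2 => by
    have hs : √3 ^ 2 = 3 := sq_sqrt (by norm_num)
    rw [G, Int.cast_sub, Int.cast_mul, G_eq_binet (n + 1), G_eq_binet n]
    field_simp
    linear_combination ((2 - √3) ^ n - (2 + √3) ^ n) * hs

theorem G_two_mul_sub_two_mul (n : ℕ) :
    (G (2 * n) : ℝ) - 2 * G n =
      ((2 + √3) ^ n - (2 - √3) ^ n) * ((2 + √3) ^ n + (2 - √3) ^ n - 2) / (2 * √3) := by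
  rw [G_eq_binet, G_eq_binet, pow_mul', pow_mul']
  ring

theorem two_div_one_sub_sub_one_of_mul_eq_one {K : Type*} [Field K] {a b : K} (hab : a * b = 1)
    (hb : b ≠ 1) : 2 / (1 - b) - 1 = (a - b) / (a + b - 2) := by
  have hb' : 1 - b ≠ 0 := sub_ne_zero.mpr hb.symm
  have ha : a ≠ 0 := left_ne_zero_of_mul_eq_one hab
  have hab' : a + b - 2 = (1 - b) ^ 2 * a := by linear_combination (2 - b) * hab
  rw [hab']
  field_simp
  linear_combination -b * hab

theorem stmt_4_general (n : ℕ) :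
    ((n : ℝ) / Real.sqrt 3) * (2 / (1 - (2 - Real.sqrt 3) ^ n) - 1) =
      2 * n * (G n : ℝ) ^ 2 / ((G (2 * n) : ℝ) - 2 * (G n : ℝ)) := by
  rcases Nat.eq_zero_or_pos n with rfl | hn
  · simp
  rw [G_two_mul_sub_two_mul, G_eq_binet]
  have hs : √3 ^ 2 = 3 := sq_sqrt (by norm_num)
  have hs_pos : 0 < √3 := by positivity
  have hβ_pos : 0 < 2 - √3 := by nlinarith
  have hβ_lt_one : 2 - √3 < 1 := by nlinarith
  set a := (2 + √3) ^ n
  set b := (2 - √3) ^ n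
  have hab : a * b = 1 := by
    rw [← mul_pow, show (2 + √3) * (2 - √3) = 1 by linear_combination -hs, one_pow]
  have hb_pos : 0 < b := pow_pos hβ_pos n
  have hb_lt_one : b < 1 := pow_lt_one₀ hβ_pos.le hβ_lt_one hn.ne'
  have ha : 1 < a := by nlinarith
  have hab_sub : a - b ≠ 0 := by linarith
  have hab_add : a + b - 2 ≠ 0 := by nlinarith
  rw [two_div_one_sub_sub_one_of_mul_eq_one hab hb_lt_one.ne]
  field_simp

theorem stmt_4 (n : ℕ) (hn : 0 < n) :
    ((n : ℝ) / Real.sqrt 3) * (2 / (1 - (2 - Real.sqrt 3) ^ n) - 1) =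
      2 * n * (G n : ℝ) ^ 2 / ((G (2 * n) : ℝ) - 2 * (G n : ℝ)) :=
  stmt_4_general n
end

section
/- For every positive integer n, the quantity (n(n²-1))/6 + (n²/√3)·(2/(1-(2-√3)^n) − 1) is a rational number. -/
/-!
Conjugation in `ℤ[√3]` gives `(2 - √3)^n = p - q√3` and `(2 + √3)^n = p + q√3` with `p, q ∈ ℤ`.
Since these two conjugates multiply to `1`, the Cayley transform `(1 + x)/(1 - x)` of
`x = p - q√3` rationalises to `q√3/(p - 1)`, and the factor `√3` cancels against the `1/√3`.
-/

lemma exists_int_pow_sub_mul_eq_and_pow_add_mul_eq {R : Type*} [CommRing R] {s : R} {d : ℤ}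
    (hs : s * s = d) (a b : ℤ) (n : ℕ) :
    ∃ p q : ℤ, (a - b * s) ^ n = p - q * s ∧ (a + b * s) ^ n = p + q * s := by
  set φ := Zsqrtd.lift ⟨s, hs⟩
  have hφ (z : ℤ√d) : φ z = z.re + z.im * s := rfl
  have hφ_star (z : ℤ√d) : φ (star z) = z.re - z.im * s := by
    rw [hφ, Zsqrtd.re_star, Zsqrtd.im_star]; push_cast; ring
  refine ⟨(⟨a, b⟩ ^ n : ℤ√d).re, (⟨a, b⟩ ^ n : ℤ√d).im, ?_, ?_⟩
  · rw [← hφ_star, star_pow, map_pow, hφ_star]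
  · rw [← hφ, map_pow, hφ]

lemma two_div_one_sub_sub_one_eq_of_mul_conj_eq_one {K : Type*} [Field K] {p q s : K}
    (hnorm : (p - q * s) * (p + q * s) = 1) (hne : p - q * s ≠ 1) :
    2 / (1 - (p - q * s)) - 1 = q / (p - 1) * s := by
  have hden : 1 - (p - q * s) ≠ 0 := sub_ne_zero.mpr hne.symm
  -- For `x, y = p ∓ q s`, `p = 1` means `y = 2 - x`, and then `x y = 1` reads `(1 - x)^2 = 0`.
  have hp : p - 1 ≠ 0 := by
    intro hp
    apply hden
    have : (1 - (p - q * s)) ^ 2 = 0 := by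
      linear_combination 2 * (p - q * s) * hp - hnorm
    exact pow_eq_zero_iff two_ne_zero |>.mp this
  rw [div_sub_one hden, div_mul_eq_mul_div, div_eq_div_iff hden hp]
  linear_combination hnorm

theorem stmt_6 (n : ℕ) (hn : 0 < n) :
    ∃ q : ℚ,
      (n * ((n : ℝ) ^ 2 - 1)) / 6 +
        ((n : ℝ) ^ 2 / Real.sqrt 3) * (2 / (1 - (2 - Real.sqrt 3) ^ n) - 1) = (q : ℝ) := by
  have hs : √3 * √3 = 3 := Real.mul_self_sqrt (by norm_num)
  have hs_bounds : 1 < √3 ∧ √3 ≤ 2 := by constructor <;> nlinarith [Real.sqrt_nonneg 3]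
  obtain ⟨p, q, hminus, hplus⟩ :=
    exists_int_pow_sub_mul_eq_and_pow_add_mul_eq (d := 3) (by exact_mod_cast hs) 2 1 n
  push_cast [one_mul] at hminus hplus
  have hnorm : (p - q * √3) * (p + q * √3) = 1 := by
    rw [← hminus, ← hplus, ← mul_pow, show (2 - √3) * (2 + √3) = 1 by linear_combination -hs,
      one_pow]
  have hne : (p : ℝ) - q * √3 ≠ 1 :=
    hminus ▸ (pow_lt_one₀ (by linarith) (by linarith) hn.ne').ne
  refine ⟨n * (n ^ 2 - 1) / 6 + n ^ 2 * q / (p - 1), ?_⟩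
  rw [hminus, two_div_one_sub_sub_one_eq_of_mul_conj_eq_one hnorm hne]
  push_cast
  field_simp
end

section
/- Define A_n = −1 − √3 + 2√3/(1 − (2-√3)^n) and B_n = −1 − √3 + 2√3/(1 + (2-√3)^n) for positive integers n, and let C_m = m − 1. Then for all positive integers n and all i with 1 ≤ i ≤ n, (1/2)·[ ( (2 + C_{n-i})·C_i / (2 + C_{n-i} + C_i) ) + ( (2 + B_{n-i})·B_i / (2 + B_{n-i} + B_i) ) ] equals (1 + (2-√3)^n − (2-√3)^{n-i+1} − (2-√3)^{i-1})/(2√3·(1 − (2-√3)^n)) + (n−i+1)(i−1)/(2n). -/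
noncomputable def A (m : ℕ) : ℝ :=
  -1 - Real.sqrt 3 + 2 * Real.sqrt 3 / (1 - (2 - Real.sqrt 3) ^ m)

noncomputable def B (m : ℕ) : ℝ :=
  -1 - Real.sqrt 3 + 2 * Real.sqrt 3 / (1 + (2 - Real.sqrt 3) ^ m)

noncomputable def C (m : ℕ) : ℝ := (m : ℝ) - 1

theorem stmt_9 (n i : ℕ) (hn : 0 < n) (hi : 1 ≤ i) (hin : i ≤ n) :
    (1 / 2) * ((2 + C (n - i)) * C i / (2 + C (n - i) + C i) +
        (2 + B (n - i)) * B i / (2 + B (n - i) + B i)) =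
      (1 + (2 - Real.sqrt 3) ^ n - (2 - Real.sqrt 3) ^ (n - i + 1) -
          (2 - Real.sqrt 3) ^ (i - 1)) /
        (2 * Real.sqrt 3 * (1 - (2 - Real.sqrt 3) ^ n)) +
      ((n : ℝ) - i + 1) * ((i : ℝ) - 1) / (2 * n) := by
  have hs3 : Real.sqrt 3 ^ 2 = 3 := Real.sq_sqrt (by norm_num)
  set s := Real.sqrt 3 with hsdef
  have hsnn : 0 ≤ s := Real.sqrt_nonneg 3
  have hs1 : 1 < s := by nlinarith
  have hs2 : s < 2 := by nlinarith
  have hq0 : (0:ℝ) < 2 - s := by linarith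
  have hq1 : (2:ℝ) - s < 1 := by linarith
  have ha0 : (0:ℝ) < (2-s)^i := pow_pos hq0 i
  have hb0 : (0:ℝ) < (2-s)^(n-i) := pow_pos hq0 (n-i)
  have ha1 : (2-s)^i < 1 := pow_lt_one₀ (le_of_lt hq0) hq1 (by omega)
  have hb1 : (2-s)^(n-i) ≤ 1 := pow_le_one₀ (le_of_lt hq0) (le_of_lt hq1)
  have hab : (2-s)^i * (2-s)^(n-i) < 1 := by nlinarith
  have hqn : (2-s)^n = (2-s)^i * (2-s)^(n-i) := by rw [← pow_add]; congr 1; omega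
  have hqni1 : (2-s)^(n-i+1) = (2-s)^(n-i) * (2-s) := pow_succ _ _
  have hq2s : (2-s) * (2+s) = 1 := by linear_combination (-1 : ℝ) * hs3
  have hqi1 : (2-s)^(i-1) = (2-s)^i * (2+s) := by
    have h1 : (2-s)^(i-1) * (2-s) = (2-s)^i := by rw [← pow_succ]; congr 1; omega
    calc (2-s)^(i-1) = (2-s)^(i-1) * ((2-s) * (2+s)) := by rw [hq2s, mul_one]
      _ = (2-s)^i * (2+s) := by rw [← mul_assoc, h1]
  have hni : ((n - i : ℕ) : ℝ) = (n:ℝ) - i := Nat.cast_sub hin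
  have hnn : ((n:ℝ)) ≠ 0 := Nat.cast_ne_zero.mpr (by omega)
  have hd1 : (1:ℝ) + (2-s)^(n-i) ≠ 0 := by positivity
  have hd2 : (1:ℝ) + (2-s)^i ≠ 0 := by positivity
  have hdm : (1:ℝ) - (2-s)^i * (2-s)^(n-i) ≠ 0 := by nlinarith
  have hs0 : s ≠ 0 := by linarith
  -- C part
  have hC : (1/2) * ((2 + C (n - i)) * C i / (2 + C (n - i) + C i)) =
      ((n : ℝ) - i + 1) * ((i : ℝ) - 1) / (2 * n) := by
    simp only [C, hni]
    have hden : 2 + ((n:ℝ) - i - 1) + ((i:ℝ) - 1) = n := by ring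
    rw [hden]
    field_simp
    ring
  -- B part
  have hBden : 2 + B (n-i) + B i =
      2*s*(1 - (2-s)^i * (2-s)^(n-i)) / ((1 + (2-s)^i) * (1 + (2-s)^(n-i))) := by
    simp only [B, ← hsdef]
    field_simp
    ring
  have hBden0 : 2 + B (n-i) + B i ≠ 0 := by
    rw [hBden]
    have h1 : (0:ℝ) < 1 - (2-s)^i * (2-s)^(n-i) := by nlinarith
    positivity
  have hB : (1/2) * ((2 + B (n - i)) * B i / (2 + B (n - i) + B i)) =
      (1 + (2-s) ^ n - (2-s) ^ (n - i + 1) - (2-s) ^ (i - 1)) /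
        (2 * s * (1 - (2-s) ^ n)) := by
    rw [hBden, hqn, hqni1, hqi1]
    simp only [B, ← hsdef]
    field_simp
    rw [div_left_inj' (by rwa [mul_comm] at hdm)]
    linear_combination ((1-(2-s)^(n-i))*(1-(2-s)^i)) * hs3
  linear_combination hC + hB
end
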